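/- Let Ω ⊂ ℝ^N be a bounded domain and let V ∈ L^q(Ω) with V ≥ -S_p + δ a.e. for some δ > 0, where S_p is the best constant in S‖u‖_{L^p(Ω)}^p ≤ ∫_Ω |∇u|^p dx on W_0^{1,p}(Ω). Then there exists δ₀ > 0 such that ∫_Ω |∇u|^p + V|u|^p dx ≥ δ₀ ∫_Ω |∇u|^p dx for all u ∈ W_0^{1,p}(Ω). -/

import Mathlib

open MeasureTheory Real Set
open scoped ENNReal RealInnerProductSpace

noncomputable section

abbrev Euc (N : ℕ) := EuclideanSpace ℝ (Fin N)

/-- A formal surrogate for membership in `W^{1,p}_0(Ω)`. -/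
def SobolevW0 {N : ℕ} (p : ℝ) (Ω : Set (Euc N)) (u : Euc N → ℝ) : Prop :=
  Differentiable ℝ u ∧ tsupport u ⊆ Ω ∧
    MemLp u (ENNReal.ofReal p) (volume.restrict Ω) ∧
    MemLp (fun x => ‖gradient u x‖) (ENNReal.ofReal p) (volume.restrict Ω)

/-- The energy `∫_Ω |∇u|^p + V |u|^p dx`. -/
def dirichletEnergy {N : ℕ} (p : ℝ) (Ω : Set (Euc N)) (V u : Euc N → ℝ) : ℝ :=
  ∫ x in Ω, (‖gradient u x‖ ^ p + V x * |u x| ^ p)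

/-- The principal eigenvalue `λ(g,V)` defined via its variational characterization. -/
def principalEV {N : ℕ} (p : ℝ) (Ω : Set (Euc N)) (g V : Euc N → ℝ) : ℝ :=
  sInf (dirichletEnergy p Ω V '' {u | SobolevW0 p Ω u ∧ (∫ x in Ω, g x * |u x| ^ p) = 1})

/-- The best constant `S_r` in `S ‖u‖_{L^r}^p ≤ ∫_Ω |∇u|^p`. -/
def bestSobolev {N : ℕ} (p r : ℝ) (Ω : Set (Euc N)) : ℝ :=
  sInf {c | ∃ u : Euc N → ℝ, SobolevW0 p Ω u ∧ (∫ x in Ω, |u x| ^ r) = 1 ∧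
    c = ∫ x in Ω, ‖gradient u x‖ ^ p}

/-- The `L^q(Ω)` norm. -/
def lqNorm {N : ℕ} (q : ℝ) (Ω : Set (Euc N)) (f : Euc N → ℝ) : ℝ :=
  (∫ x in Ω, |f x| ^ q) ^ (1 / q)

/-- `f` is a rearrangement of `g` on `Ω`. -/
def IsRearrangement {N : ℕ} (Ω : Set (Euc N)) (f g : Euc N → ℝ) : Prop :=
  ∀ α : ℝ, volume {x ∈ Ω | α ≤ f x} = volume {x ∈ Ω | α ≤ g x}

/-- Hypothesis (H1). -/
def SatisfiesH1 {N : ℕ} (p q : ℝ) (Ω : Set (Euc N)) (g V : Euc N → ℝ) : Prop :=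
  MemLp g (ENNReal.ofReal q) (volume.restrict Ω) ∧
  MemLp V (ENNReal.ofReal q) (volume.restrict Ω) ∧
  (p ≤ N → (N : ℝ) / p < q) ∧ ((N : ℝ) < p → q = 1)

/-- Hypothesis (H2). -/
def SatisfiesH2 {N : ℕ} (p q : ℝ) (Ω : Set (Euc N)) (g V : Euc N → ℝ) : Prop :=
  (lqNorm q Ω (fun x => min (V x) 0) < bestSobolev p (p * (q / (q - 1))) Ω ∨
    ∃ δ > 0, ∀ᵐ x ∂(volume.restrict Ω), -bestSobolev p p Ω + δ ≤ V x) ∧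
  ¬ (∀ᵐ x ∂(volume.restrict Ω), g x ≤ 0)

/-- `u` is a weak solution of `-Δ_p u + V |u|^{p-2} u = λ g |u|^{p-2} u` in `Ω`. -/
def IsWeakSolution {N : ℕ} (p : ℝ) (Ω : Set (Euc N)) (g V : Euc N → ℝ) (lam : ℝ)
    (u : Euc N → ℝ) : Prop :=
  ∀ φ : Euc N → ℝ, SobolevW0 p Ω φ →
    (∫ x in Ω, (‖gradient u x‖ ^ (p - 2) * ⟪gradient u x, gradient φ x⟫ +
      V x * |u x| ^ (p - 2) * u x * φ x)) =
    lam * ∫ x in Ω, g x * |u x| ^ (p - 2) * u x * φ x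

/-- The divergence of a vector field. -/
def divg {N : ℕ} (F : Euc N → Euc N) (x : Euc N) : ℝ :=
  ∑ i, fderiv ℝ F x (EuclideanSpace.single i 1) i

/-!
Normalising `u` in `L^p` gives `S_p ∫ |u|^p ≤ ∫ |∇u|^p`, and `V ≥ -S_p + δ` gives
`∫ |∇u|^p + V |u|^p ≥ ∫ |∇u|^p + (δ - S_p) ∫ |u|^p`. Applying the first inequality to the
fraction `S_p / (S_p + δ)` of `∫ |∇u|^p` leaves `δ / (S_p + δ) ∫ |∇u|^p + δ² / (S_p + δ) ∫ |u|^p`,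
so `δ₀ = δ / (S_p + δ)` works. When `V |u|^p` is not integrable its Bochner integral is `0` and
the bound is immediate.
-/

open MeasureTheory Real Set

theorem gradient_const_mul {F : Type*} [NormedAddCommGroup F] [InnerProductSpace ℝ F]
    [CompleteSpace F] {u : F → ℝ} {x : F} (hu : DifferentiableAt ℝ u x) (c : ℝ) :
    gradient (fun y => c * u y) x = c • gradient u x := by
  simp [gradient, fderiv_const_mul hu c]

theorem min_zero_integral_le_integral {α : Type*} [MeasurableSpace α] {μ : Measure α}
    {f g : α → ℝ} (hf : Integrable f μ) (hfg : f ≤ᵐ[μ] g) :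
    min 0 (∫ x, f x ∂μ) ≤ ∫ x, g x ∂μ := by
  by_cases hg : Integrable g μ
  · exact (min_le_right _ _).trans (integral_mono_ae hf hg hfg)
  · rw [integral_undef hg]
    exact min_le_left _ _

namespace SobolevW0

variable {N : ℕ} {p : ℝ} {Ω : Set (Euc N)} {u : Euc N → ℝ}

theorem const_mul (hu : SobolevW0 p Ω u) (c : ℝ) : SobolevW0 p Ω (fun x => c * u x) := by
  obtain ⟨hdiff, hsupp, hmem, hgrad⟩ := hu
  refine ⟨hdiff.const_mul c, tsupport_mul_subset_right.trans hsupp, hmem.const_mul c, ?_⟩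
  simpa only [gradient_const_mul (hdiff _), norm_smul] using hgrad.const_mul ‖c‖

theorem integrable_abs_rpow (hu : SobolevW0 p Ω u) (hp : 0 < p) :
    Integrable (fun x => |u x| ^ p) (volume.restrict Ω) := by
  simpa [Real.norm_eq_abs, ENNReal.toReal_ofReal hp.le] using
    hu.2.2.1.integrable_norm_rpow (by simpa using hp) ENNReal.ofReal_ne_top

end SobolevW0

theorem bestSobolev_nonneg {N : ℕ} (p r : ℝ) (Ω : Set (Euc N)) : 0 ≤ bestSobolev p r Ω :=
  Real.sInf_nonneg <| by
    rintro c ⟨u, -, -, rfl⟩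
    exact integral_nonneg fun x => rpow_nonneg (norm_nonneg _) p

theorem bestSobolev_le {N : ℕ} {p r : ℝ} {Ω : Set (Euc N)} {u : Euc N → ℝ}
    (hu : SobolevW0 p Ω u) (hnorm : ∫ x in Ω, |u x| ^ r = 1) :
    bestSobolev p r Ω ≤ ∫ x in Ω, ‖gradient u x‖ ^ p := by
  refine csInf_le ⟨0, ?_⟩ ⟨u, hu, hnorm, rfl⟩
  rintro c ⟨v, -, -, rfl⟩
  exact integral_nonneg fun x => rpow_nonneg (norm_nonneg _) p

theorem bestSobolev_mul_integral_le {N : ℕ} {p : ℝ} (hp : 0 < p) {Ω : Set (Euc N)}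
    {u : Euc N → ℝ} (hu : SobolevW0 p Ω u) :
    bestSobolev p p Ω * ∫ x in Ω, |u x| ^ p ≤ ∫ x in Ω, ‖gradient u x‖ ^ p := by
  set T := ∫ x in Ω, |u x| ^ p
  set G := ∫ x in Ω, ‖gradient u x‖ ^ p
  have hG : 0 ≤ G := integral_nonneg fun x => rpow_nonneg (norm_nonneg _) p
  have hT0 : 0 ≤ T := integral_nonneg fun x => rpow_nonneg (abs_nonneg _) p
  rcases hT0.eq_or_lt with hT | hT
  · rwa [← hT, mul_zero]
  set c := T ^ (-1 / p)
  have hc : 0 < c := rpow_pos_of_pos hT _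
  have hcp : c ^ p = T⁻¹ := by
    rw [← rpow_mul hT.le, div_mul_cancel₀ _ hp.ne', rpow_neg_one]
  have hnorm : ∫ x in Ω, |c * u x| ^ p = 1 := by
    simp_rw [abs_mul, mul_rpow (abs_nonneg c) (abs_nonneg _), abs_of_pos hc]
    rw [integral_const_mul, hcp, inv_mul_cancel₀ hT.ne']
  have hgrad : ∫ x in Ω, ‖gradient (fun y => c * u y) x‖ ^ p = T⁻¹ * G := by
    simp_rw [gradient_const_mul (hu.1 _), norm_smul, mul_rpow (norm_nonneg c) (norm_nonneg _),
      Real.norm_of_nonneg hc.le]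
    rw [integral_const_mul, hcp]
  have hle := bestSobolev_le (hu.const_mul c) hnorm
  rw [hgrad, inv_mul_eq_div, le_div_iff₀ hT] at hle
  exact hle

theorem coercivity_of_bounded_below_potential_general {N : ℕ} (Ω : Set (Euc N))
    (p : ℝ) (hp : 1 < p) (V : Euc N → ℝ) (δ : ℝ) (hδ : 0 < δ)
    (hVlow : ∀ᵐ x ∂(volume.restrict Ω), -bestSobolev p p Ω + δ ≤ V x) :
    ∃ δ₀ > 0, ∀ u : Euc N → ℝ, SobolevW0 p Ω u →
      δ₀ * ∫ x in Ω, ‖gradient u x‖ ^ p ≤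
        (∫ x in Ω, ‖gradient u x‖ ^ p) + ∫ x in Ω, V x * |u x| ^ p := by
  set S := bestSobolev p p Ω
  have hS : 0 ≤ S := bestSobolev_nonneg p p Ω
  have hp0 : 0 < p := one_pos.trans hp
  refine ⟨δ / (S + δ), by positivity, fun u hu => ?_⟩
  set T := ∫ x in Ω, |u x| ^ p
  set G := ∫ x in Ω, ‖gradient u x‖ ^ p
  have hsob : S * T ≤ G := bestSobolev_mul_integral_le hp0 hu
  have hT : 0 ≤ T := integral_nonneg fun x => rpow_nonneg (abs_nonneg _) p
  have hG : 0 ≤ G := integral_nonneg fun x => rpow_nonneg (norm_nonneg _) p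
  have hpot : min 0 ((-S + δ) * T) ≤ ∫ x in Ω, V x * |u x| ^ p := by
    rw [← integral_const_mul]
    refine min_zero_integral_le_integral ((hu.integrable_abs_rpow hp0).const_mul _) ?_
    filter_upwards [hVlow] with x hx
    exact mul_le_mul_of_nonneg_right hx (rpow_nonneg (abs_nonneg _) p)
  rw [div_mul_eq_mul_div, div_le_iff₀ (by positivity)]
  rcases min_cases 0 ((-S + δ) * T) with ⟨hmin, -⟩ | ⟨hmin, -⟩ <;> rw [hmin] at hpot
  · nlinarith [mul_nonneg hG hS, mul_nonneg hpot (by positivity : 0 ≤ S + δ)]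
  · nlinarith [mul_le_mul_of_nonneg_left hsob hS, mul_nonneg hT (mul_pos hδ hδ).le]

theorem coercivity_of_bounded_below_potential {N : ℕ} (hN : 2 ≤ N) (Ω : Set (Euc N))
    (hΩb : Bornology.IsBounded Ω) (hΩm : MeasurableSet Ω) (p q : ℝ) (hp : 1 < p)
    (hq : 1 ≤ q) (V : Euc N → ℝ)
    (hV : MemLp V (ENNReal.ofReal q) (volume.restrict Ω)) (δ : ℝ) (hδ : 0 < δ)
    (hVlow : ∀ᵐ x ∂(volume.restrict Ω), -bestSobolev p p Ω + δ ≤ V x) :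
    ∃ δ₀ > 0, ∀ u : Euc N → ℝ, SobolevW0 p Ω u →
      δ₀ * ∫ x in Ω, ‖gradient u x‖ ^ p ≤
        (∫ x in Ω, ‖gradient u x‖ ^ p) + ∫ x in Ω, V x * |u x| ^ p :=
  coercivity_of_bounded_below_potential_general Ω p hp V δ hδ hVlow
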